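/- For m ≥ 2, the number of Type II subsets of size k of the extended m-ary tree T^+_{m,1} equals m if k = m − 1 and 0 otherwise. (A subset S ⊆ V \ {r'} is Type II if S is not a power dominating set but S ∪ {r'} is.) -/

import Mathlib

/-- The power domination propagation sequence: `pIter G S 0 = N[S]` and
`pIter G S (k+1)` adds every vertex that is the unique unobserved neighbor
of some observed vertex. -/
def pIter {V : Type*} (G : SimpleGraph V) (S : Set V) : ℕ → Set V
  | 0 => {v | v ∈ S ∨ ∃ s ∈ S, G.Adj s v}
  | k + 1 => pIter G S k ∪ {x | ∃ v ∈ pIter G S k, G.neighborSet v \ pIter G S k = {x}}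

/-- The stable limit `P^∞(S)` of the power domination process. -/
def pInf {V : Type*} (G : SimpleGraph V) (S : Set V) : Set V := ⋃ k, pIter G S k

/-- `S` is a power dominating set for `G` if `P^∞(S) = V`. -/
def PowerDominates {V : Type*} (G : SimpleGraph V) (S : Set V) : Prop :=
  pInf G S = Set.univ

/-- The star `T⁺_{m,1}`: center `r = none` adjacent to the stem
`r' = some none` and to the leaves `r_i = some (some i)` for `i : Fin m`. -/
def starG (m : ℕ) : SimpleGraph (Option (Option (Fin m))) :=
  SimpleGraph.fromRel (fun a _ => a = none)

/-!
In `T⁺_{m,1}` the stem and the leaves all have the centre as their only neighbour, so any two of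
them are twins: while both are unobserved, every vertex that could force one of them also sees the
other, so neither is ever forced. Hence a set avoiding the centre fails to power dominate as soon
as it misses two non-central vertices; if it misses at most one, the centre is observed and forces
the missing vertex. A Type II set therefore avoids the centre and the stem and misses exactly one
leaf, i.e. it is one of the `m` sets of `m - 1` leaves.
-/

open Finset

section PowerDomination

variable {V : Type*} (G : SimpleGraph V) {S : Set V}

lemma pIter_subset_pInf (k : ℕ) : pIter G S k ⊆ pInf G S :=
  Set.subset_iUnion (pIter G S) k

lemma powerDominates_of_pIter_eq_univ {k : ℕ} (h : pIter G S k = Set.univ) :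
    PowerDominates G S :=
  Set.eq_univ_of_univ_subset (h ▸ pIter_subset_pInf G k)

lemma mem_pIter_succ_of_forces {k : ℕ} {v x : V} (hv : v ∈ pIter G S k) (hvx : G.Adj v x)
    (hforce : G.neighborSet v \ pIter G S k ⊆ {x}) : x ∈ pIter G S (k + 1) := by
  by_cases hx : x ∈ pIter G S k
  · exact Or.inl hx
  · exact Or.inr ⟨v, hv, hforce.antisymm (Set.singleton_subset_iff.2 ⟨hvx, hx⟩)⟩

lemma notMem_pIter_succ_of_twin {k : ℕ} {a b : V} (hab : a ≠ b)
    (hN : G.neighborSet a = G.neighborSet b) (ha : a ∉ pIter G S k) (hb : b ∉ pIter G S k) :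
    a ∉ pIter G S (k + 1) := by
  rintro (ha' | ⟨v, -, hv⟩)
  · exact ha ha'
  · have hva : a ∈ G.neighborSet v \ pIter G S k := hv ▸ rfl
    have hvb : b ∈ G.neighborSet v \ pIter G S k := by
      refine ⟨?_, hb⟩
      rw [SimpleGraph.mem_neighborSet, G.adj_comm, ← SimpleGraph.mem_neighborSet, ← hN,
        SimpleGraph.mem_neighborSet, G.adj_comm]
      exact hva.1
    rw [hv] at hvb
    exact hab hvb.symm

lemma not_powerDominates_of_twins {a b : V} (hab : a ≠ b)
    (hN : G.neighborSet a = G.neighborSet b) (ha : a ∉ pIter G S 0) (hb : b ∉ pIter G S 0) :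
    ¬ PowerDominates G S := by
  have hunobserved : ∀ k, a ∉ pIter G S k ∧ b ∉ pIter G S k := by
    intro k
    induction k with
    | zero => exact ⟨ha, hb⟩
    | succ k ih =>
      exact ⟨notMem_pIter_succ_of_twin G hab hN ih.1 ih.2,
        notMem_pIter_succ_of_twin G hab.symm hN.symm ih.2 ih.1⟩
  intro h
  have ha_inf : a ∈ pInf G S := by rw [h]; trivial
  obtain ⟨k, hk⟩ := Set.mem_iUnion.1 ha_inf
  exact (hunobserved k).1 hk

end PowerDomination

section Star

variable {m : ℕ}

lemma starG_adj {a b : Option (Option (Fin m))} :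
    (starG m).Adj a b ↔ a ≠ b ∧ (a = none ∨ b = none) := by
  simp [starG, SimpleGraph.fromRel_adj]

lemma starG_neighborSet_of_ne_none {x : Option (Option (Fin m))} (hx : x ≠ none) :
    (starG m).neighborSet x = {none} := by
  ext y
  simp only [SimpleGraph.mem_neighborSet, starG_adj, Set.mem_singleton_iff]
  constructor
  · rintro ⟨-, hx' | hy⟩
    exacts [absurd hx' hx, hy]
  · rintro rfl
    exact ⟨hx, Or.inr rfl⟩

lemma notMem_pIter_zero_starG {S : Set (Option (Option (Fin m)))} {x : Option (Option (Fin m))}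
    (hS : none ∉ S) (hx : x ≠ none) (hxS : x ∉ S) : x ∉ pIter (starG m) S 0 := by
  rintro (hxS' | ⟨s, hs, hsx⟩)
  · exact hxS hxS'
  · rcases starG_adj.1 hsx with ⟨-, rfl | rfl⟩
    exacts [hS hs, hx rfl]

theorem powerDominates_starG_iff (hm : 0 < m) (S : Finset (Option (Option (Fin m)))) :
    PowerDominates (starG m) S ↔ none ∈ S ∨ #(insert none S)ᶜ ≤ 1 := by
  by_cases hS : none ∈ S
  · simp only [hS, true_or, iff_true]
    refine powerDominates_of_pIter_eq_univ (k := 0) _ (Set.eq_univ_of_forall fun x => ?_)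
    by_cases hx : x = none
    · exact Or.inl (hx ▸ hS)
    · exact Or.inr ⟨none, hS, starG_adj.2 ⟨Ne.symm hx, Or.inl rfl⟩⟩
  simp only [hS, false_or, card_le_one, mem_compl, mem_insert, not_or]
  constructor
  · rintro h a ⟨ha, haS⟩ b ⟨hb, hbS⟩
    by_contra hab
    refine not_powerDominates_of_twins _ hab ?_ (notMem_pIter_zero_starG hS ha haS)
      (notMem_pIter_zero_starG hS hb hbS) h
    rw [starG_neighborSet_of_ne_none ha, starG_neighborSet_of_ne_none hb]
  · intro hmiss
    -- The stem and the first leaf cannot both be missing, so `S` observes the centre.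
    obtain ⟨s, hs⟩ : S.Nonempty := by
      by_contra hempty
      rw [not_nonempty_iff_eq_empty] at hempty
      have := hmiss (some none) (by simp [hempty]) (some (some ⟨0, hm⟩)) (by simp [hempty])
      simp at this
    have hcentre : none ∈ pIter (starG m) S 0 :=
      Or.inr ⟨s, hs, starG_adj.2 ⟨fun h => hS (h ▸ hs), Or.inr rfl⟩⟩
    refine powerDominates_of_pIter_eq_univ (k := 1) _ (Set.eq_univ_of_forall fun x => ?_)
    by_cases hx : x = none ∨ x ∈ S
    · rcases hx with rfl | hxS
      exacts [Or.inl hcentre, Or.inl (Or.inl hxS)]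
    rw [not_or] at hx
    refine mem_pIter_succ_of_forces _ hcentre (starG_adj.2 ⟨Ne.symm hx.1, Or.inl rfl⟩) ?_
    rintro y ⟨hy, hy0⟩
    have hy_ne : y ≠ none := by
      rintro rfl
      exact (starG m).irrefl hy
    exact hmiss y ⟨hy_ne, fun hyS => hy0 (Or.inl hyS)⟩ x hx

theorem starG_typeII_iff (hm : 0 < m) {S : Finset (Option (Option (Fin m)))}
    (hstem : some none ∉ S) :
    (¬ PowerDominates (starG m) S ∧ PowerDominates (starG m) (↑S ∪ {some none})) ↔
      none ∉ S ∧ #S + 1 = m := by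
  have hcard : ∀ T : Finset (Option (Option (Fin m))), none ∉ T →
      #(insert none T)ᶜ = m + 1 - #T := by
    intro T hT
    rw [card_compl, card_insert_of_notMem hT, Fintype.card_option, Fintype.card_option,
      Fintype.card_fin]
    omega
  rw [Set.union_singleton, ← coe_insert, powerDominates_starG_iff hm,
    powerDominates_starG_iff hm]
  by_cases hS : none ∈ S
  · simp [hS]
  have hS' : none ∉ insert (some none) S := by simp [hS]
  rw [hcard S hS, hcard _ hS', card_insert_of_notMem hstem]
  simp only [hS, hS', false_or, not_false_eq_true, true_and]
  omega

theorem starG_typeII_iff_mem_powersetCard (hm : 0 < m) (k : ℕ)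
    (S : Finset (Option (Option (Fin m)))) :
    (some none ∉ S ∧ #S = k ∧ ¬ PowerDominates (starG m) S ∧
        PowerDominates (starG m) (↑S ∪ {some none})) ↔
      S ∈ powersetCard k {none, some none}ᶜ ∧ k = m - 1 := by
  have hsub : S ⊆ {none, some none}ᶜ ↔ none ∉ S ∧ some none ∉ S := by
    rw [subset_compl_comm]
    simp [insert_subset_iff]
  rw [mem_powersetCard, hsub]
  by_cases hstem : some none ∈ S
  · simp [hstem]
  rw [starG_typeII_iff hm hstem]
  by_cases hcentre : none ∈ S
  · simp [hcentre]
  simp only [hstem, hcentre, not_false_eq_true, true_and]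
  omega

end Star

/-- For m ≥ 2, the number of Type II subsets of size k of T⁺_{m,1}
(S ⊆ V \ {r'} with S not power dominating but S ∪ {r'} power dominating)
equals m if k = m − 1 and 0 otherwise. -/
theorem stmt7 (m : ℕ) (hm : 2 ≤ m) (k : ℕ) :
    Nat.card {S : Finset (Option (Option (Fin m))) //
        some none ∉ S ∧ S.card = k ∧
        ¬ PowerDominates (starG m) (↑S : Set (Option (Option (Fin m)))) ∧
        PowerDominates (starG m) ((↑S : Set (Option (Option (Fin m)))) ∪ {some none})} =
      if k = m - 1 then m else 0 := by
  rw [Nat.card_congr (Equiv.subtypeEquivRight (starG_typeII_iff_mem_powersetCard (by omega) k))]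
  split_ifs with hk
  · have hleaves : #({none, some none}ᶜ : Finset (Option (Option (Fin m)))) = m := by
      simp [card_compl]
    simp only [hk, and_true]
    rw [Nat.card_eq_finsetCard, card_powersetCard, hleaves, Nat.choose_symm (by omega),
      Nat.choose_one_right]
  · simp [hk]
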